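/- Let r_1 > r_2 > … > r_m be a finite strictly decreasing sequence of positive integers. Then there exists a nontrivial word w ∈ F_2 of word length at most 4m²·(r_1 + 1) with the following property: w is a law in every finite group Γ in which every element γ ∈ Γ satisfies γ^{r_i} = 1 for at least one index i ∈ {1, …, m}. -/

import Mathlib

/-!
With `x = of 0` and `y = of 1`, the word `⁅y xᵃ y⁻¹, xᵇ⁆` is trivial in any group where
`xᵃ = 1` or `xᵇ = 1`, and `⁅y P y⁻¹, x Q x⁻¹⁆` is trivial as soon as `P` or `Q` is.
So a balanced binary tree of depth `d = log₂ (m - 1)` of commutators of the second kind, with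
the words `⁅y x^{r 2j} y⁻¹, x^{r (2j+1)}⁆` at its leaves, is killed by every homomorphism to `Γ`,
since the image of `x` satisfies some `x^{r i} = 1`. Its length is at most `4^d (4 r₀ + 7)`,
which is at most `4 m² (r₀ + 1)` because `r₀ ≥ m`.

It is nontrivial because the reduced word of every node starts with `y` and ends with `x⁻¹`:
with these end letters nothing cancels where the pieces of the commutators meet, so the reduced
word of a node is the concatenation of the reduced words of its pieces.
-/

open scoped commutatorElement

namespace FreeGroup

variable {α : Type*} [DecidableEq α]

theorem toWord_mul_of_isReduced_append {x y : FreeGroup α}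
    (h : IsReduced (x.toWord ++ y.toWord)) : (x * y).toWord = x.toWord ++ y.toWord := by
  rw [toWord_mul, h.reduce_eq]

theorem norm_commutatorElement_le (u v : FreeGroup α) :
    norm ⁅u, v⁆ ≤ 2 * norm u + 2 * norm v := by
  rw [commutatorElement_def]
  have := norm_mul_le (u * v * u⁻¹) v⁻¹
  have := norm_mul_le (u * v) u⁻¹
  have := norm_mul_le u v
  simp only [norm_inv_eq] at *
  omega

theorem norm_conj_le (g w : FreeGroup α) : norm (g * w * g⁻¹) ≤ norm w + 2 * norm g := by
  have := norm_mul_le (g * w) g⁻¹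
  have := norm_mul_le g w
  rw [norm_inv_eq] at *
  omega

def HasEnds (w : FreeGroup α) (a b : α × Bool) : Prop :=
  w.toWord.head? = some a ∧ w.toWord.getLast? = some b

variable {u v w : FreeGroup α} {a b c d : α × Bool}

theorem HasEnds.ne_one (h : HasEnds w a b) : w ≠ 1 := by
  rintro rfl
  simp [HasEnds] at h

theorem HasEnds.mul (hu : HasEnds u a b) (hv : HasEnds v c d) (hbc : b.1 = c.1 → b.2 = c.2) :
    HasEnds (u * v) a d := by
  have hred : IsReduced (u.toWord ++ v.toWord) :=
    List.isChain_append.mpr ⟨isReduced_toWord, isReduced_toWord, by simpa [hu.2, hv.1]⟩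
  simp [HasEnds, toWord_mul_of_isReduced_append hred, List.head?_append, List.getLast?_append,
    hu.1, hv.2]

theorem HasEnds.inv (h : HasEnds w a b) : HasEnds w⁻¹ (b.1, !b.2) (a.1, !a.2) := by
  simp [HasEnds, invRev, List.head?_reverse, List.getLast?_reverse, h.1, h.2]

theorem hasEnds_of_pow (g : α) {n : ℕ} (hn : n ≠ 0) : HasEnds (of g ^ n) (g, true) (g, true) := by
  simp [HasEnds, List.head?_replicate, List.getLast?_replicate, hn]

theorem hasEnds_of (g : α) : HasEnds (of g) (g, true) (g, true) := by
  simpa using hasEnds_of_pow g one_ne_zero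

theorem HasEnds.conj_of (h : HasEnds w a b) (g : α) (ha : g = a.1 → true = a.2)
    (hb : b.1 = g → b.2 = false) : HasEnds (of g * w * (of g)⁻¹) (g, true) (g, false) :=
  ((hasEnds_of g).mul h ha).mul (hasEnds_of g).inv hb

theorem HasEnds.commutatorElement (hu : HasEnds u a b) (hv : HasEnds v c d)
    (hbc : b.1 = c.1 → b.2 = c.2) (hdb : d.1 = b.1 → d.2 = !b.2) (had : a.1 = d.1 → (!a.2) = !d.2) :
    HasEnds ⁅u, v⁆ a (c.1, !c.2) := by
  rw [commutatorElement_def]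
  exact ((hu.mul hv hbc).mul hu.inv hdb).mul hv.inv had

end FreeGroup

namespace PowerLaw

open FreeGroup

def leaf (a b : ℕ) : FreeGroup (Fin 2) :=
  ⁅of (1 : Fin 2) * of 0 ^ a * (of 1)⁻¹, of (0 : Fin 2) ^ b⁆

def node (P Q : FreeGroup (Fin 2)) : FreeGroup (Fin 2) := ⁅of 1 * P * (of 1)⁻¹, of 0 * Q * (of 0)⁻¹⁆

def tree : ℕ → (ℕ → FreeGroup (Fin 2)) → FreeGroup (Fin 2)
  | 0, f => f 0
  | k + 1, f => node (tree k f) (tree k fun i => f (2 ^ k + i))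

def lawWord (s : ℕ → ℕ) (d : ℕ) : FreeGroup (Fin 2) :=
  tree d fun j => leaf (s (2 * j)) (s (2 * j + 1))

theorem hasEnds_leaf {a b : ℕ} (ha : a ≠ 0) (hb : b ≠ 0) :
    HasEnds (leaf a b) (1, true) (0, false) :=
  ((hasEnds_of_pow 0 ha).conj_of 1 (by decide) (by decide)).commutatorElement
    (hasEnds_of_pow 0 hb) (by decide) (by decide) (by decide)

theorem hasEnds_node {P Q : FreeGroup (Fin 2)} (hP : HasEnds P (1, true) (0, false))
    (hQ : HasEnds Q (1, true) (0, false)) : HasEnds (node P Q) (1, true) (0, false) :=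
  (hP.conj_of 1 (by decide) (by decide)).commutatorElement (hQ.conj_of 0 (by decide) (by decide))
    (by decide) (by decide) (by decide)

theorem hasEnds_tree {f : ℕ → FreeGroup (Fin 2)} (hf : ∀ i, HasEnds (f i) (1, true) (0, false)) :
    ∀ k, HasEnds (tree k f) (1, true) (0, false)
  | 0 => hf 0
  | k + 1 => hasEnds_node (hasEnds_tree hf k) (hasEnds_tree (fun _ => hf _) k)

theorem hasEnds_lawWord {s : ℕ → ℕ} (hs : ∀ i, 0 < s i) (d : ℕ) :
    HasEnds (lawWord s d) (1, true) (0, false) :=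
  hasEnds_tree (fun _ => hasEnds_leaf (hs _).ne' (hs _).ne') d

theorem norm_leaf_le (a b : ℕ) : norm (leaf a b) ≤ 2 * a + 2 * b + 4 := by
  have := norm_commutatorElement_le (of 1 * of 0 ^ a * (of 1)⁻¹) (of (0 : Fin 2) ^ b)
  have := norm_conj_le (of 1) (of (0 : Fin 2) ^ a)
  simp only [norm_of, norm_of_pow] at *
  unfold leaf
  omega

theorem norm_node_le (P Q : FreeGroup (Fin 2)) : norm (node P Q) ≤ 2 * norm P + 2 * norm Q + 8 := by
  have := norm_commutatorElement_le (of 1 * P * (of 1)⁻¹) (of 0 * Q * (of 0)⁻¹)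
  have := norm_conj_le (of 1) P
  have := norm_conj_le (of 0) Q
  simp only [norm_of] at *
  unfold node
  omega

theorem norm_tree_le {B : ℕ} {f : ℕ → FreeGroup (Fin 2)} (hf : ∀ i, norm (f i) ≤ B) :
    ∀ k, norm (tree k f) + 3 ≤ 4 ^ k * (B + 3)
  | 0 => by simpa [tree] using hf 0
  | k + 1 => by
    have := norm_node_le (tree k f) (tree k fun i => f (2 ^ k + i))
    have := norm_tree_le hf k
    have := norm_tree_le (fun i => hf (2 ^ k + i)) k
    rw [tree, pow_succ, mul_comm (4 ^ k) 4, mul_assoc]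
    omega

theorem norm_lawWord_le {s : ℕ → ℕ} {B : ℕ} (hs : ∀ i, s i ≤ B) (d : ℕ) :
    norm (lawWord s d) + 3 ≤ 4 ^ d * (4 * B + 7) :=
  norm_tree_le (fun j => (norm_leaf_le _ _).trans (by linarith [hs (2 * j), hs (2 * j + 1)])) d

section Evaluation

variable {G : Type*} [Group G] (φ : FreeGroup (Fin 2) →* G)

theorem map_leaf_eq_one {a b : ℕ} (h : φ (of 0) ^ a = 1 ∨ φ (of 0) ^ b = 1) :
    φ (leaf a b) = 1 := by
  rcases h with h | h <;> simp [leaf, map_commutatorElement, h]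

theorem map_node_eq_one {P Q : FreeGroup (Fin 2)} (h : φ P = 1 ∨ φ Q = 1) : φ (node P Q) = 1 := by
  rcases h with h | h <;> simp [node, map_commutatorElement, h]

theorem map_tree_eq_one {f : ℕ → FreeGroup (Fin 2)} :
    ∀ {k i : ℕ}, i < 2 ^ k → φ (f i) = 1 → φ (tree k f) = 1
  | 0, i, hi, h => by
    obtain rfl : i = 0 := by simpa using hi
    exact h
  | k + 1, i, hi, h => by
    rw [tree]
    refine map_node_eq_one φ ?_
    by_cases hik : i < 2 ^ k
    · exact .inl (map_tree_eq_one hik h)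
    · refine .inr (map_tree_eq_one (i := i - 2 ^ k) (by rw [pow_succ] at hi; omega) ?_)
      rwa [Nat.add_sub_cancel' (by omega)]

theorem map_lawWord_eq_one {s : ℕ → ℕ} {d i : ℕ} (hi : i < 2 ^ (d + 1)) (h : φ (of 0) ^ s i = 1) :
    φ (lawWord s d) = 1 := by
  refine map_tree_eq_one φ (i := i / 2) (by rw [pow_succ] at hi; omega) (map_leaf_eq_one φ ?_)
  rcases Nat.even_or_odd' i with ⟨j, rfl | rfl⟩
  · exact .inl (by simpa using h)
  · exact .inr (by simpa [Nat.mul_add_div] using h)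

end Evaluation

end PowerLaw

theorem le_apply_zero_of_strictAnti {m : ℕ} (hm : 1 ≤ m) {r : Fin m → ℕ} (hpos : ∀ i, 0 < r i)
    (hdec : StrictAnti r) : m ≤ r ⟨0, hm⟩ := by
  simpa using Finset.card_le_card_of_injOn r (s := Finset.univ) (t := Finset.Icc 1 (r ⟨0, hm⟩))
    (fun i _ => Finset.mem_Icc.mpr ⟨hpos i, hdec.antitone (Nat.zero_le _)⟩)
    hdec.injective.injOn

theorem four_pow_log_mul_le {m B : ℕ} (hm : 1 ≤ m) (hmB : m ≤ B) :
    4 ^ Nat.log 2 (m - 1) * (4 * B + 7) ≤ 4 * m ^ 2 * (B + 1) + 3 := by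
  obtain ⟨k, rfl⟩ := Nat.exists_eq_add_of_le' hm
  rcases k.eq_zero_or_pos with rfl | hk
  · simp only [zero_add, Nat.sub_self, Nat.log_zero_right, pow_zero, one_pow]
    omega
  have ht : 2 ^ Nat.log 2 k ≤ k := Nat.pow_log_le_self 2 hk.ne'
  have hsq : 4 ^ Nat.log 2 k ≤ k * k := by
    rw [show (4 : ℕ) = 2 * 2 from rfl, mul_pow]
    exact Nat.mul_le_mul ht ht
  simp only [Nat.add_sub_cancel]
  nlinarith [Nat.mul_le_mul_right (4 * B + 7) hsq]

open PowerLaw in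
/-- Given a strictly decreasing sequence `r 0 > r 1 > ⋯ > r (m-1)` of positive integers,
there is a nontrivial word `w` in the free group on two generators of length at most
`4m²(r 0 + 1)` which is a law in every finite group `Γ` in which every element satisfies
`γ ^ (r i) = 1` for some `i`. -/
theorem stmt_2 (m : ℕ) (hm : 1 ≤ m) (r : Fin m → ℕ) (hpos : ∀ i, 0 < r i)
    (hdec : StrictAnti r) :
    ∃ w : FreeGroup (Fin 2), w ≠ 1 ∧
      (FreeGroup.toWord w).length ≤ 4 * m ^ 2 * (r ⟨0, hm⟩ + 1) ∧
      ∀ (Γ : Type) (_ : Group Γ) (_ : Finite Γ),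
        (∀ γ : Γ, ∃ i : Fin m, γ ^ (r i) = 1) →
        ∀ φ : FreeGroup (Fin 2) →* Γ, φ w = 1 := by
  -- padding `r` by `r 0` lets the tree have any number `2 ^ (d + 1) ≥ m` of exponent slots
  let s : ℕ → ℕ := fun k => if h : k < m then r ⟨k, h⟩ else r ⟨0, hm⟩
  have hs_pos : ∀ k, 0 < s k := fun k => by
    unfold s
    split_ifs <;> exact hpos _
  have hs_le : ∀ k, s k ≤ r ⟨0, hm⟩ := fun k => by
    unfold s
    split_ifs
    exacts [hdec.antitone (Nat.zero_le _), le_rfl]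
  refine ⟨lawWord s (Nat.log 2 (m - 1)), (hasEnds_lawWord hs_pos _).ne_one, ?_, ?_⟩
  · show FreeGroup.norm _ ≤ _
    have := norm_lawWord_le hs_le (Nat.log 2 (m - 1))
    have := four_pow_log_mul_le hm (le_apply_zero_of_strictAnti hm hpos hdec)
    omega
  · intro Γ _ _ hΓ φ
    obtain ⟨i, hi⟩ := hΓ (φ (FreeGroup.of 0))
    have hm_le : m - 1 < 2 ^ (Nat.log 2 (m - 1) + 1) := Nat.lt_pow_succ_log_self one_lt_two _
    exact map_lawWord_eq_one φ (i := i) (by omega) (by simpa [s] using hi)
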